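/- arXiv:2311.04623 — 3 statements merged into one kernel-verified Lean document; each statement's English description precedes it below -/
import Mathlib

section
/- Let q > 0. For every nonnegative integer k, the probability that a random permutation of {1,…,n} distributed according to the fixed point biased measure P_n^q has exactly k fixed points converges, as n → ∞, to e^{-q} q^k / k!. In other words, the number of fixed points under P_n^q converges in distribution to a Poisson(q) random variable. -/
/-!
Sorting permutations by their set of fixed points, the weight of `{fp = k}` is
`q^k C(n,k) D_{n-k}` with `D` the derangement numbers, while expanding
`q^fp σ = ((q-1)+1)^fp σ` over subsets of the fixed points gives
`Z_n(q) = ∑_m C(n,m) (n-m)! (q-1)^m`. After dividing by `n!`, the first is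
`q^k/k! · D_{n-k}/(n-k)! → q^k e^{-1}/k!` and the second is a partial sum of the exponential
series at `q - 1`, so the ratio tends to `e^{-1} q^k/k! / e^{q-1} = e^{-q} q^k/k!`.
-/

open Finset Filter

/-- The number of fixed points of a permutation of `{1,…,n}`. -/
def fp {n : ℕ} (σ : Equiv.Perm (Fin n)) : ℕ :=
  (Finset.univ.filter fun i => σ i = i).card

open Equiv Topology
open scoped Nat

theorem Real.tendsto_sum_range_succ_pow_div_factorial (x : ℝ) :
    Tendsto (fun n => ∑ m ∈ range (n + 1), x ^ m / m !) atTop (𝓝 (Real.exp x)) := by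
  rw [Real.exp_eq_exp_ℝ]
  exact (NormedSpace.expSeries_div_hasSum_exp x).tendsto_sum_nat.comp (tendsto_add_atTop_nat 1)

namespace Equiv.Perm

variable {α : Type*} [Fintype α] [DecidableEq α] {K : Type*} [Field K] [CharZero K]

theorem card_filter_forall_mem_fixed (S : Finset α) :
    #{σ : Perm α | ∀ a ∈ S, σ a = a} = (Fintype.card α - #S)! := by
  rw [← Fintype.card_subtype, ← Fintype.card_coe S, ← Fintype.card_subtype_compl,
    ← Fintype.card_perm]
  exact Fintype.card_congr ((Perm.subtypeEquivSubtypePerm (· ∉ S)).trans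
    (subtypeEquivRight fun σ => by simp)).symm

theorem card_filter_fixed_eq (S : Finset α) :
    #{σ : Perm α | ({a | σ a = a} : Finset α) = S} = numDerangements (Fintype.card α - #S) := by
  rw [← Fintype.card_subtype, ← Fintype.card_coe S, ← Fintype.card_subtype_compl,
    ← card_derangements_eq_numDerangements]
  refine Fintype.card_congr ((derangements.subtypeEquiv (· ∉ S)).trans
    (subtypeEquivRight fun σ => ?_)).symm
  simp only [not_not, Function.mem_fixedPoints, Function.IsFixedPt, Finset.ext_iff, mem_filter,
    mem_univ, true_and]
  exact forall_congr' fun a => Iff.comm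

theorem card_filter_card_fixed_eq (k : ℕ) :
    #{σ : Perm α | #{a | σ a = a} = k} =
      (Fintype.card α).choose k * numDerangements (Fintype.card α - k) := by
  rw [card_eq_sum_card_fiberwise (f := fun σ : Perm α => ({a | σ a = a} : Finset α))
      (t := powersetCard k univ) (fun σ hσ => by simpa using hσ),
    sum_congr rfl (g := fun _ => numDerangements (Fintype.card α - k)), sum_const,
    card_powersetCard, card_univ, smul_eq_mul]
  intro S hS
  rw [mem_powersetCard_univ] at hS
  rw [filter_filter, ← hS, ← card_filter_fixed_eq S]
  congr 1
  exact filter_congr fun σ _ => ⟨And.right, fun h => ⟨h ▸ rfl, h⟩⟩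

theorem sum_pow_card_fixed {R : Type*} [CommRing R] (x : R) :
    ∑ σ : Perm α, x ^ #{a | σ a = a} =
      ∑ m ∈ range (Fintype.card α + 1),
        (Fintype.card α).choose m * (Fintype.card α - m)! * (x - 1) ^ m := by
  have expand (σ : Perm α) :
      x ^ #{a | σ a = a} = ∑ T ∈ ({a | σ a = a} : Finset α).powerset, (x - 1) ^ #T := by
    simpa using (sum_pow_mul_eq_add_pow (x - 1) 1 {a | σ a = a}).symm
  calc ∑ σ : Perm α, x ^ #{a | σ a = a}
      = ∑ T : Finset α, ∑ σ ∈ {σ : Perm α | ∀ a ∈ T, σ a = a}, (x - 1) ^ #T := by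
        simp_rw [expand]
        exact sum_comm' fun σ T => by simp [subset_iff]
    _ = ∑ T ∈ (univ : Finset α).powerset, ((Fintype.card α - #T)! * (x - 1) ^ #T : R) := by
        simp [sum_const, card_filter_forall_mem_fixed]
    _ = _ := by
        rw [sum_powerset_apply_card (fun m => ((Fintype.card α - m)! * (x - 1) ^ m : R))]
        simp [mul_assoc]

theorem sum_pow_card_fixed_div_factorial (x : K) :
    (∑ σ : Perm α, x ^ #{a | σ a = a}) / (Fintype.card α)! =
      ∑ m ∈ range (Fintype.card α + 1), (x - 1) ^ m / m ! := by
  rw [sum_pow_card_fixed, sum_div]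
  refine sum_congr rfl fun m hm => ?_
  rw [Nat.cast_choose K (Nat.lt_succ_iff.mp (mem_range.mp hm))]
  field_simp [Nat.factorial_ne_zero]

theorem sum_filter_card_fixed_eq_div_factorial (x : K) {k : ℕ} (hk : k ≤ Fintype.card α) :
    (∑ σ ∈ {σ : Perm α | #{a | σ a = a} = k}, x ^ #{a | σ a = a}) / (Fintype.card α)! =
      x ^ k / k ! * (numDerangements (Fintype.card α - k) / (Fintype.card α - k)!) := by
  rw [sum_congr rfl fun σ hσ => by rw [(mem_filter.mp hσ).2], sum_const, nsmul_eq_mul,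
    card_filter_card_fixed_eq, Nat.cast_mul, Nat.cast_choose K hk]
  field_simp [Nat.factorial_ne_zero]

end Equiv.Perm

theorem fp_biased_tendsto_poisson_general (q : ℝ) (k : ℕ) :
    Tendsto (fun n : ℕ =>
        (∑ σ ∈ Finset.univ.filter fun σ : Equiv.Perm (Fin n) => fp σ = k, q ^ fp σ) /
          ∑ σ : Equiv.Perm (Fin n), q ^ fp σ)
      atTop (nhds (Real.exp (-q) * q ^ k / Nat.factorial k)) := by
  have hnum : Tendsto (fun n => (∑ σ ∈ univ.filter fun σ : Perm (Fin n) => fp σ = k, q ^ fp σ)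
      / n !) atTop (𝓝 (q ^ k / k ! * Real.exp (-1))) := by
    refine ((numDerangements_tendsto_inv_e.comp (tendsto_sub_atTop_nat k)).const_mul _).congr' ?_
    filter_upwards [eventually_ge_atTop k] with n hn
    have h := Perm.sum_filter_card_fixed_eq_div_factorial q (α := Fin n) (by simpa using hn)
    rw [Fintype.card_fin] at h
    exact h.symm
  have hden : Tendsto (fun n => (∑ σ : Perm (Fin n), q ^ fp σ) / n !) atTop
      (𝓝 (Real.exp (q - 1))) :=
    (Real.tendsto_sum_range_succ_pow_div_factorial (q - 1)).congr fun n => by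
      simpa [fp] using (Perm.sum_pow_card_fixed_div_factorial q (α := Fin n)).symm
  have hlim : q ^ k / k ! * Real.exp (-1) / Real.exp (q - 1) = Real.exp (-q) * q ^ k / k ! := by
    rw [mul_div_assoc, ← Real.exp_sub]
    ring_nf
  refine (hlim ▸ hnum.div hden (Real.exp_ne_zero _)).congr fun n =>
    div_div_div_cancel_right₀ (by positivity) _ _

/-- Fixed points of a random permutation under the fixed point biased measure `P_n^q`
converge in distribution to a Poisson(q) random variable: for each `k`, the probability
of exactly `k` fixed points tends to `e^{-q} q^k / k!`. -/
theorem fp_biased_tendsto_poisson (q : ℝ) (hq : 0 < q) (k : ℕ) :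
    Tendsto (fun n : ℕ =>
        (∑ σ ∈ Finset.univ.filter fun σ : Equiv.Perm (Fin n) => fp σ = k, q ^ fp σ) /
          ∑ σ : Equiv.Perm (Fin n), q ^ fp σ)
      atTop (nhds (Real.exp (-q) * q ^ k / Nat.factorial k)) :=
  fp_biased_tendsto_poisson_general q k
end

section
/- For every real u, the normalized sum (1/n!) Σ_{σ∈S_n} u^{fp(σ)} converges to e^{u-1} as n → ∞. Equivalently, Z_n(u)/n! → e^{u-1}. -/
open Finset Filter

/-- The number of permutations of `Fin n` fixing every element of a set `S`
is `(n - |S|)!`. -/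
lemma card_fixing_aux (n : ℕ) (S : Finset (Fin n)) :
    Fintype.card {σ : Equiv.Perm (Fin n) // ∀ i ∈ S, σ i = i} = Nat.factorial (n - S.card) := by
  have e : Equiv.Perm {x : Fin n // x ∉ S} ≃ {σ : Equiv.Perm (Fin n) // ∀ i ∈ S, σ i = i} :=
    (Equiv.Perm.subtypeEquivSubtypePerm (fun x => x ∉ S)).trans (Equiv.subtypeEquivRight (by
      intro σ; constructor
      · intro h i hi; exact h i (not_not.2 hi)
      · intro h i hi; exact h i (not_not.1 hi)))
  rw [← Fintype.card_congr e, Fintype.card_perm]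
  congr 1
  rw [Fintype.card_subtype_compl, Fintype.card_fin]
  congr 1
  simp [Fintype.card_subtype]

/-- `Z_n(u) = Σ_{j=0}^n C(n,j) (n-j)! (u-1)^j`. -/
lemma fp_sum_key (u : ℝ) (n : ℕ) :
    (∑ σ : Equiv.Perm (Fin n), u ^ fp σ)
      = ∑ j ∈ range (n + 1),
          ((n.choose j : ℝ) * Nat.factorial (n - j)) * (u - 1) ^ j := by
  have step1 : ∀ σ : Equiv.Perm (Fin n),
      u ^ fp σ = ∑ S ∈ (Finset.univ.filter fun i => σ i = i).powerset, (u - 1) ^ S.card := by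
    intro σ
    rw [Finset.sum_powerset_apply_card (fun m => (u - 1) ^ m)]
    simp only [nsmul_eq_mul]
    rw [← fp]
    have := add_pow (u - 1) 1 (fp σ)
    simp only [one_pow, mul_one, sub_add_cancel] at this
    rw [this]
    exact Finset.sum_congr rfl fun j _ => by ring
  calc (∑ σ : Equiv.Perm (Fin n), u ^ fp σ)
      = ∑ σ : Equiv.Perm (Fin n), ∑ S ∈ (Finset.univ : Finset (Fin n)).powerset,
          if S ⊆ Finset.univ.filter (fun i => σ i = i) then (u - 1) ^ S.card else 0 := by
        refine Finset.sum_congr rfl fun σ _ => ?_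
        rw [step1 σ, ← Finset.sum_filter]
        congr 1
        ext S
        simp [Finset.mem_powerset]
    _ = ∑ S ∈ (Finset.univ : Finset (Fin n)).powerset,
          ((Finset.univ.filter fun σ : Equiv.Perm (Fin n) =>
              S ⊆ Finset.univ.filter (fun i => σ i = i)).card : ℝ) * (u - 1) ^ S.card := by
        rw [Finset.sum_comm]
        refine Finset.sum_congr rfl fun S _ => ?_
        rw [Finset.sum_ite, Finset.sum_const_zero, add_zero, Finset.sum_const, nsmul_eq_mul]
    _ = ∑ S ∈ (Finset.univ : Finset (Fin n)).powerset,
          (Nat.factorial (n - S.card) : ℝ) * (u - 1) ^ S.card := by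
        refine Finset.sum_congr rfl fun S _ => ?_
        congr 2
        rw [← card_fixing_aux n S, Fintype.card_subtype]
        congr 1
        ext σ
        simp [Finset.subset_iff]
    _ = ∑ j ∈ range (n + 1), ((n.choose j : ℝ) * Nat.factorial (n - j)) * (u - 1) ^ j := by
        rw [← Finset.card_fin n]
        rw [Finset.sum_powerset_apply_card
          (fun m => (Nat.factorial ((Finset.univ : Finset (Fin n)).card - m) : ℝ) * (u - 1) ^ m)]
        simp only [Finset.card_fin, nsmul_eq_mul]
        exact Finset.sum_congr rfl fun j _ => by ring

/-- For every real `u`, `Z_n(u)/n! = (1/n!) Σ_{σ∈S_n} u^{fp σ} → e^{u-1}` as `n → ∞`. -/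
theorem normalized_fp_sum_tendsto (u : ℝ) :
    Tendsto (fun n : ℕ =>
        (∑ σ : Equiv.Perm (Fin n), u ^ fp σ) / Nat.factorial n)
      atTop (nhds (Real.exp (u - 1))) := by
  have heq : ∀ n : ℕ,
      (∑ σ : Equiv.Perm (Fin n), u ^ fp σ) / Nat.factorial n
        = ∑ j ∈ range (n + 1), (u - 1) ^ j / Nat.factorial j := by
    intro n
    rw [fp_sum_key, Finset.sum_div]
    refine Finset.sum_congr rfl fun j hj => ?_
    have hj' : j ≤ n := Nat.lt_succ_iff.mp (Finset.mem_range.mp hj)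
    rw [div_eq_div_iff (by positivity) (by positivity)]
    have := Nat.choose_mul_factorial_mul_factorial hj'
    push_cast [← this]
    ring
  simp only [heq]
  have hs := Real.summable_pow_div_factorial (u - 1)
  have hexp : Real.exp (u - 1) = ∑' j : ℕ, (u - 1) ^ j / Nat.factorial j := by
    rw [Real.exp_eq_exp_ℝ, NormedSpace.exp_eq_tsum_div]
  rw [hexp]
  exact hs.hasSum.tendsto_sum_nat.comp (tendsto_add_atTop_nat 1)
end

section
/- Let q > 0 and consider the equation 1 + 2(1-q)z + √(1-4z) = 0 for complex z with |z| ≤ 1/4, where √ denotes the principal branch of the square root. This equation has a solution z with |z| ≤ 1/4 if and only if q ≥ 3, and in that case the solution is z = (q-2)/(q-1)². -/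
/-!
Squaring `√(1 - 4z) = 2(q - 1)z - 1` leaves `z((q - 1)²z - (q - 2)) = 0`, and `z = 0` is not a
root, so the only candidate is the real number `z = (q - 2)/(q - 1)²`. There
`1 - 4z = t²` with `t = (q - 3)/(q - 1)` and `1 + 2(1 - q)z = -t`, so the equation reads
`|t| = t`, i.e. `t ≥ 0`: this holds for `q ≥ 3` and for `q < 1`, and for `0 < q < 1` the
candidate violates `|z| ≤ 1/4`.
-/

open Complex

lemma Complex.ofReal_sq_cpow_half (s : ℝ) : ((s : ℂ) ^ 2) ^ ((1 : ℂ) / 2) = ((|s| : ℝ) : ℂ) := by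
  have hhalf : (1 : ℂ) / 2 = ((1 / 2 : ℝ) : ℂ) := by push_cast; rfl
  rw [← ofReal_pow, hhalf, ← ofReal_cpow (sq_nonneg s), ← Real.sqrt_eq_rpow,
    Real.sqrt_sq_eq_abs]

lemma eq_div_sq_of_add_cpow_half_eq_zero {c z : ℂ}
    (h : 1 + 2 * (1 - c) * z + (1 - 4 * z) ^ ((1 : ℂ) / 2) = 0) :
    c ≠ 1 ∧ z = (c - 2) / (c - 1) ^ 2 := by
  have hsqrt : (1 - 4 * z) ^ ((1 : ℂ) / 2) = 2 * (c - 1) * z - 1 := by linear_combination h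
  have hsq : (2 * (c - 1) * z - 1) ^ 2 = 1 - 4 * z := by
    rw [← hsqrt, one_div]
    exact cpow_ofNat_inv_pow (1 - 4 * z) 2
  have hz0 : z ≠ 0 := by
    rintro rfl
    norm_num at h
  have hlin : (c - 1) ^ 2 * z = c - 2 := by
    refine mul_left_cancel₀ hz0 ?_
    linear_combination (1 / 4 : ℂ) * hsq
  have hc : c ≠ 1 := by
    rintro rfl
    norm_num at hlin
  refine ⟨hc, ?_⟩
  rw [eq_div_iff (pow_ne_zero 2 (sub_ne_zero.mpr hc)), mul_comm, hlin]

lemma add_cpow_half_at_div_sq_eq_zero_iff {q : ℝ} (hq : q ≠ 1) :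
    1 + 2 * (1 - (q : ℂ)) * (((q : ℂ) - 2) / ((q : ℂ) - 1) ^ 2)
        + (1 - 4 * (((q : ℂ) - 2) / ((q : ℂ) - 1) ^ 2)) ^ ((1 : ℂ) / 2) = 0 ↔
      0 ≤ (q - 3) / (q - 1) := by
  have hq' : (q : ℂ) - 1 ≠ 0 := sub_ne_zero.mpr (ofReal_ne_one.mpr hq)
  have hsq :
      1 - 4 * (((q : ℂ) - 2) / ((q : ℂ) - 1) ^ 2) = (((q - 3) / (q - 1) : ℝ) : ℂ) ^ 2 := by
    push_cast
    field_simp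
    ring
  have hlhs : 1 + 2 * (1 - (q : ℂ)) * (((q : ℂ) - 2) / ((q : ℂ) - 1) ^ 2) =
      -(((q - 3) / (q - 1) : ℝ) : ℂ) := by
    push_cast
    field_simp
    ring
  rw [hsq, ofReal_sq_cpow_half, hlhs, neg_add_eq_sub, sub_eq_zero, ofReal_inj, abs_eq_self]

lemma abs_div_sq_le_quarter_and_nonneg_iff {q : ℝ} (hq : 0 < q) (hq1 : q ≠ 1) :
    (|(q - 2) / (q - 1) ^ 2| ≤ 1 / 4 ∧ 0 ≤ (q - 3) / (q - 1)) ↔ 3 ≤ q := by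
  have hpos : 0 < (q - 1) ^ 2 := by positivity
  constructor
  · rintro ⟨hz, ht⟩
    rcases lt_or_gt_of_ne hq1 with hlt | hgt
    · rw [abs_div, abs_of_pos hpos, abs_of_neg (by linarith), div_le_iff₀ hpos] at hz
      nlinarith
    · rw [le_div_iff₀ (sub_pos.mpr hgt), zero_mul] at ht
      linarith
  · intro h3
    refine ⟨?_, div_nonneg (by linarith) (by linarith)⟩
    rw [abs_of_nonneg (div_nonneg (by linarith) hpos.le), div_le_iff₀ hpos]
    nlinarith [sq_nonneg (q - 3)]

/-- For `q > 0`, the equation `1 + 2(1-q)z + √(1-4z) = 0` (with the principal branch of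
the complex square root, realized as `w ^ (1/2 : ℂ)`) has a solution `z` with
`|z| ≤ 1/4` if and only if `q ≥ 3`, in which case the solution is
`z = (q-2)/(q-1)²`. -/
theorem dominant_pole_characterization (q : ℝ) (hq : 0 < q) :
    ∀ z : ℂ,
      (‖z‖ ≤ 1 / 4 ∧
          1 + 2 * (1 - (q : ℂ)) * z + (1 - 4 * z) ^ ((1 : ℂ) / 2) = 0) ↔
        (3 ≤ q ∧ z = ((q : ℂ) - 2) / ((q : ℂ) - 1) ^ 2) := by
  have hnorm : ‖((q : ℂ) - 2) / ((q : ℂ) - 1) ^ 2‖ = |(q - 2) / (q - 1) ^ 2| := by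
    rw [← Real.norm_eq_abs, ← norm_real]
    push_cast
    rfl
  intro z
  constructor
  · rintro ⟨hz, h⟩
    obtain ⟨hq1, rfl⟩ := eq_div_sq_of_add_cpow_half_eq_zero h
    rw [ofReal_ne_one] at hq1
    rw [hnorm] at hz
    have ht := (add_cpow_half_at_div_sq_eq_zero_iff hq1).mp h
    exact ⟨(abs_div_sq_le_quarter_and_nonneg_iff hq hq1).mp ⟨hz, ht⟩, rfl⟩
  · rintro ⟨h3, rfl⟩
    have hq1 : q ≠ 1 := by linarith
    obtain ⟨hz, ht⟩ := (abs_div_sq_le_quarter_and_nonneg_iff hq hq1).mpr h3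
    exact ⟨hnorm ▸ hz, (add_cpow_half_at_div_sq_eq_zero_iff hq1).mpr ht⟩
end
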